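/- arXiv:1612.04060 — 3 statements merged into one kernel-verified Lean document; each statement's English description precedes it below -/
import Mathlib

section
/- Let H ∈ C^{m×n} with full column rank and C ∈ C^{m×m} Hermitian positive definite. Define G = H^H C^{-1} H + H^T (C^{-1})^* H^* and E = G^{-1} H^H C^{-1}. Then E C E^H + E^* C^* E^T = G^{-1}; i.e., the covariance of the BWLUE for real parameter vectors equals (2 Re(H^H C^{-1} H))^{-1}. -/
/-!
With `A = Hᴴ C⁻¹ H`, which is Hermitian, the second summand of `G` is `Aᵀ`, so `G = A + Aᵀ` is both
Hermitian and symmetric. The first summand of the covariance collapses to `G⁻¹ A G⁻¹`; the second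
is its entrywise conjugate, which for a Hermitian matrix is its transpose `G⁻¹ Aᵀ G⁻¹`. Their sum
is `G⁻¹ G G⁻¹ = G⁻¹`.
-/

open Matrix ComplexOrder

/-- The matrix `G = Hᴴ C⁻¹ H + Hᵀ (C⁻¹)* H*`. -/
noncomputable def Gmat {m n : ℕ} (H : Matrix (Fin m) (Fin n) ℂ)
    (C : Matrix (Fin m) (Fin m) ℂ) : Matrix (Fin n) (Fin n) ℂ :=
  Hᴴ * C⁻¹ * H + Hᵀ * (C⁻¹).map (starRingEnd ℂ) * H.map (starRingEnd ℂ)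

/-- The estimator matrix `E = G⁻¹ Hᴴ C⁻¹`. -/
noncomputable def Emat {m n : ℕ} (H : Matrix (Fin m) (Fin n) ℂ)
    (C : Matrix (Fin m) (Fin m) ℂ) : Matrix (Fin n) (Fin m) ℂ :=
  (Gmat H C)⁻¹ * Hᴴ * C⁻¹

namespace Matrix

variable {l m n R : Type*} [CommRing R]

section Inverse

variable [Fintype m] [DecidableEq m]

theorem nonsing_inv_mul_mul_nonsing_inv (A : Matrix m m R) : A⁻¹ * A * A⁻¹ = A⁻¹ := by
  by_cases h : IsUnit A.det
  · rw [nonsing_inv_mul A h, Matrix.one_mul]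
  · simp [nonsing_inv_apply_not_isUnit A h]

theorem inv_add_transpose_mul_mul_inv_add_transpose (A : Matrix m m R) :
    (A + Aᵀ)⁻¹ * A * (A + Aᵀ)⁻¹ + ((A + Aᵀ)⁻¹ * A * (A + Aᵀ)⁻¹)ᵀ = (A + Aᵀ)⁻¹ := by
  have hsymm : ((A + Aᵀ)⁻¹)ᵀ = (A + Aᵀ)⁻¹ := by
    rw [transpose_nonsing_inv, transpose_add, transpose_transpose, add_comm]
  rw [transpose_mul, transpose_mul, hsymm, ← Matrix.mul_assoc, ← Matrix.add_mul, ← Matrix.mul_add,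
    nonsing_inv_mul_mul_nonsing_inv]

end Inverse

variable [StarRing R]

theorem map_starRingEnd_eq_conjTranspose_transpose (M : Matrix l n R) :
    M.map (starRingEnd R) = Mᴴᵀ :=
  rfl

theorem mul_nonsing_inv_mul_conjTranspose_of_isHermitian [Fintype m] [DecidableEq m] [Fintype n]
    {C : Matrix m m R} (hC : C.IsHermitian) (P : Matrix n m R) :
    P * C⁻¹ * C * (P * C⁻¹)ᴴ = P * C⁻¹ * Pᴴ := by
  rw [conjTranspose_mul, conjTranspose_nonsing_inv, hC.eq]
  calc P * C⁻¹ * C * (C⁻¹ * Pᴴ) = P * (C⁻¹ * C * C⁻¹) * Pᴴ := by simp only [Matrix.mul_assoc]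
    _ = P * C⁻¹ * Pᴴ := by rw [nonsing_inv_mul_mul_nonsing_inv]

theorem map_starRingEnd_mul_mul_transpose_of_isHermitian [Fintype m] {C : Matrix m m R}
    (hC : C.IsHermitian) (E : Matrix n m R) :
    E.map (starRingEnd R) * C.map (starRingEnd R) * Eᵀ = (E * C * Eᴴ)ᵀ := by
  simp only [map_starRingEnd_eq_conjTranspose_transpose, hC.eq, transpose_mul, Matrix.mul_assoc]

end Matrix

theorem stmt8_general {m n : ℕ} (H : Matrix (Fin m) (Fin n) ℂ) (C : Matrix (Fin m) (Fin m) ℂ)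
    (hC : C.PosDef) :
    Emat H C * C * (Emat H C)ᴴ
        + (Emat H C).map (starRingEnd ℂ) * C.map (starRingEnd ℂ) * (Emat H C)ᵀ
      = (Gmat H C)⁻¹ := by
  have hCinv : C⁻¹.IsHermitian := hC.1.inv
  have hA : (Hᴴ * C⁻¹ * H).IsHermitian := isHermitian_conjTranspose_mul_mul H hCinv
  have hG : Gmat H C = Hᴴ * C⁻¹ * H + (Hᴴ * C⁻¹ * H)ᵀ := by
    simp only [Gmat, map_starRingEnd_eq_conjTranspose_transpose, hCinv.eq, transpose_mul,
      Matrix.mul_assoc]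
  have hfirst : Emat H C * C * (Emat H C)ᴴ = (Gmat H C)⁻¹ * (Hᴴ * C⁻¹ * H) * (Gmat H C)⁻¹ := by
    rw [Emat, mul_nonsing_inv_mul_conjTranspose_of_isHermitian hC.1, conjTranspose_mul,
      conjTranspose_conjTranspose, hG, ((hA.add hA.transpose).inv).eq]
    simp only [Matrix.mul_assoc]
  rw [map_starRingEnd_mul_mul_transpose_of_isHermitian hC.1, hfirst, hG,
    inv_add_transpose_mul_mul_inv_add_transpose]

/-- The covariance of the BWLUE for real parameter vectors:
`E C Eᴴ + E* C* Eᵀ = G⁻¹`. -/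
theorem stmt8 {m n : ℕ} (H : Matrix (Fin m) (Fin n) ℂ) (C : Matrix (Fin m) (Fin m) ℂ)
    (hC : C.PosDef) (hrank : H.rank = n) :
    Emat H C * C * (Emat H C)ᴴ
        + (Emat H C).map (starRingEnd ℂ) * C.map (starRingEnd ℂ) * (Emat H C)ᵀ
      = (Gmat H C)⁻¹ :=
  stmt8_general H C hC
end

section
/- Let H ∈ C^{m×n} with full column rank and C ∈ C^{m×m} Hermitian positive definite. Among all vectors e ∈ C^m satisfying the unbiasedness constraint e^H H + e^T H^* = u_i^T (where u_i is the i-th standard basis vector of R^n), the quantity e^H C e + e^T C^* e^* is minimized by e_i^H = u_i^T (2 Re(H^H C^{-1} H))^{-1} H^H C^{-1}. -/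
/-!
For Hermitian `C` the objective equals `2 eᴴ C e`. Any unbiased `e` is `e₀ + d` with
`2 Re(Hᴴ d) = 0`. The cross term `e₀ᴴ C d = uᵢᵀ M⁻¹ Hᴴ d`, where `M = 2 Re(Hᴴ C⁻¹ H)` is real, is
therefore purely imaginary, so `eᴴ C e = e₀ᴴ C e₀ + dᴴ C d ≥ e₀ᴴ C e₀`.
-/

open Matrix ComplexOrder

/-- The variance objective `eᴴ C e + eᵀ C* e*`. -/
noncomputable def obj {m : ℕ} (C : Matrix (Fin m) (Fin m) ℂ) (e : Fin m → ℂ) : ℂ :=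
  star e ⬝ᵥ C.mulVec e + e ⬝ᵥ (C.map (starRingEnd ℂ)).mulVec (star e)

namespace Matrix

variable {ι κ R : Type*}

section StarRing

variable [CommSemiring R] [StarRing R]

lemma vecMul_map_starRingEnd [Fintype ι] (v : ι → R) (P : Matrix ι κ R) :
    v ᵥ* P.map (starRingEnd R) = Pᴴ *ᵥ v := by
  rw [← mulVec_transpose]
  rfl

lemma IsHermitian.map_starRingEnd {A : Matrix ι ι R} (hA : A.IsHermitian) :
    A.map (starRingEnd R) = Aᵀ := by
  ext i j
  exact hA.apply j i

lemma IsHermitian.star_dotProduct_mulVec_comm [Fintype ι] {A : Matrix ι ι R} (hA : A.IsHermitian)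
    (x y : ι → R) : star y ⬝ᵥ A *ᵥ x = star (star x ⬝ᵥ A *ᵥ y) := by
  rw [star_dotProduct, star_mulVec, ← dotProduct_mulVec, hA.eq]

end StarRing

lemma PosSemidef.star_dotProduct_mulVec_le_add [Fintype ι] [CommRing R] [PartialOrder R]
    [StarRing R] [IsOrderedAddMonoid R] {A : Matrix ι ι R} (hA : A.PosSemidef) {x y : ι → R}
    (hxy : star x ⬝ᵥ A *ᵥ y + star (star x ⬝ᵥ A *ᵥ y) = 0) :
    star x ⬝ᵥ A *ᵥ x ≤ star (x + y) ⬝ᵥ A *ᵥ (x + y) := by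
  have hexpand : star (x + y) ⬝ᵥ A *ᵥ (x + y) = star x ⬝ᵥ A *ᵥ x + star y ⬝ᵥ A *ᵥ y +
      (star x ⬝ᵥ A *ᵥ y + star (star x ⬝ᵥ A *ᵥ y)) := by
    rw [star_add, mulVec_add, add_dotProduct, dotProduct_add, dotProduct_add,
      hA.isHermitian.star_dotProduct_mulVec_comm x y]
    abel
  rw [hexpand, hxy, add_zero]
  exact le_add_of_nonneg_right (hA.dotProduct_mulVec_nonneg y)

lemma mulVec_injective_of_rank_eq_card [Fintype κ] {K : Type*} [Field K] {A : Matrix ι κ K}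
    (hA : A.rank = Fintype.card κ) : Function.Injective A.mulVec := by
  rw [mulVec_injective_iff, linearIndependent_iff_card_eq_finrank_span, ← hA,
    rank_eq_finrank_span_cols, Set.finrank]

lemma IsHermitian.two_smul_map_re {A : Matrix ι ι ℂ} (hA : A.IsHermitian) :
    (2 : ℂ) • A.map (fun z => (z.re : ℂ)) = A + Aᵀ := by
  ext i j
  rw [add_apply, transpose_apply, ← hA.apply j i, ← starRingEnd_apply, Complex.add_conj]
  simp

lemma IsHermitian.map_starRingEnd_inv_add_transpose [Fintype ι] [DecidableEq ι] [CommRing R]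
    [StarRing R] {A : Matrix ι ι R} (hA : A.IsHermitian) :
    (A + Aᵀ)⁻¹.map (starRingEnd R) = (A + Aᵀ)⁻¹ := by
  rw [(hA.add hA.transpose).inv.map_starRingEnd, (isSymm_add_transpose_self A).inv.eq]

end Matrix

section Estimator

variable {m n R : Type*} [Fintype m] [Fintype n] [DecidableEq m] [DecidableEq n]
  [CommRing R] [StarRing R] {H : Matrix m n R} {C : Matrix m m R}

/-- For Hermitian `G = Hᴴ C⁻¹ H` over `ℂ`, `G + Gᵀ = 2 Re G`, so the rows of this matrix are
the weight vectors `eᵢᴴ = uᵢᵀ (2 Re(Hᴴ C⁻¹ H))⁻¹ Hᴴ C⁻¹`. -/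
noncomputable def blueWeights (H : Matrix m n R) (C : Matrix m m R) : Matrix n m R :=
  (Hᴴ * C⁻¹ * H + (Hᴴ * C⁻¹ * H)ᵀ)⁻¹ * Hᴴ * C⁻¹

lemma blueWeights_unbiased (hC : C.IsHermitian) (hM : IsUnit (Hᴴ * C⁻¹ * H + (Hᴴ * C⁻¹ * H)ᵀ))
    (i : n) :
    blueWeights H C i ᵥ* H + star (blueWeights H C i) ᵥ* H.map (starRingEnd R) =
      Pi.single i 1 := by
  set G := Hᴴ * C⁻¹ * H
  have hG : G.IsHermitian := isHermitian_conjTranspose_mul_mul H hC.inv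
  have hrow : blueWeights H C i ᵥ* H = ((G + Gᵀ)⁻¹ * G) i := by
    rw [← mul_apply_eq_vecMul]
    simp only [blueWeights, G, Matrix.mul_assoc]
  have hrow_conj : star (blueWeights H C i) ᵥ* H.map (starRingEnd R) = ((G + Gᵀ)⁻¹ * Gᵀ) i := by
    rw [vecMul_map_starRingEnd, ← star_vecMul, hrow]
    change (((G + Gᵀ)⁻¹ * G).map (starRingEnd R)) i = _
    rw [Matrix.map_mul, hG.map_starRingEnd_inv_add_transpose, hG.map_starRingEnd]
  rw [hrow, hrow_conj]
  change ((G + Gᵀ)⁻¹ * G + (G + Gᵀ)⁻¹ * Gᵀ) i = _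
  rw [← Matrix.mul_add, nonsing_inv_mul _ ((isUnit_iff_isUnit_det _).mp hM)]
  ext j
  exact one_eq_pi_single

lemma blueWeights_dotProduct_mulVec_add_star_eq_zero (hC : C.IsHermitian) (hCu : IsUnit C) (i : n)
    {d : m → R}
    (hd : star d ᵥ* H + d ᵥ* H.map (starRingEnd R) = 0) :
    blueWeights H C i ⬝ᵥ C *ᵥ d + star (blueWeights H C i ⬝ᵥ C *ᵥ d) = 0 := by
  set G := Hᴴ * C⁻¹ * H
  set w := Hᴴ *ᵥ d
  have hG : G.IsHermitian := isHermitian_conjTranspose_mul_mul H hC.inv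
  have hw : star w + w = 0 := by
    rw [star_mulVec, conjTranspose_conjTranspose]
    rwa [vecMul_map_starRingEnd] at hd
  have hWC : blueWeights H C * C = (G + Gᵀ)⁻¹ * Hᴴ :=
    nonsing_inv_mul_cancel_right C _ ((isUnit_iff_isUnit_det C).mp hCu)
  have hs : blueWeights H C i ⬝ᵥ C *ᵥ d = (G + Gᵀ)⁻¹ i ⬝ᵥ w := by
    rw [dotProduct_mulVec, ← mul_apply_eq_vecMul, hWC]
    exact congrFun (mulVec_mulVec d _ _).symm i
  have hreal : star ((G + Gᵀ)⁻¹ i) = (G + Gᵀ)⁻¹ i :=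
    congrFun hG.map_starRingEnd_inv_add_transpose i
  rw [hs, ← star_dotProduct_star, hreal, dotProduct_comm (star w), ← dotProduct_add, add_comm w,
    hw, dotProduct_zero]

end Estimator

lemma obj_eq_two_mul {m : ℕ} {C : Matrix (Fin m) (Fin m) ℂ} (hC : C.IsHermitian) (e : Fin m → ℂ) :
    obj C e = 2 * (star e ⬝ᵥ C *ᵥ e) := by
  rw [obj, hC.map_starRingEnd, dotProduct_mulVec e, vecMul_transpose, dotProduct_comm, two_mul]

/-- Among all `e` satisfying the unbiasedness constraint `eᴴ H + eᵀ H* = uᵢᵀ`,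
the variance `eᴴ C e + eᵀ C* e*` is minimized by
`eᵢᴴ = uᵢᵀ (2 Re(Hᴴ C⁻¹ H))⁻¹ Hᴴ C⁻¹`. -/
theorem stmt9 {m n : ℕ} (H : Matrix (Fin m) (Fin n) ℂ) (C : Matrix (Fin m) (Fin m) ℂ)
    (hC : C.PosDef) (hrank : H.rank = n) (i : Fin n)
    (e₀ : Fin m → ℂ)
    (he₀ : e₀ = fun j =>
      star ((((2 : ℂ) • (Hᴴ * C⁻¹ * H).map (fun z => (z.re : ℂ)))⁻¹ * Hᴴ * C⁻¹) i j)) :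
    (star e₀ ᵥ* H + e₀ ᵥ* H.map (starRingEnd ℂ) = Pi.single i 1) ∧
    ∀ e : Fin m → ℂ,
      star e ᵥ* H + e ᵥ* H.map (starRingEnd ℂ) = Pi.single i 1 →
      obj C e₀ ≤ obj C e := by
  have hG : (Hᴴ * C⁻¹ * H).PosDef :=
    hC.inv.conjTranspose_mul_mul_same (mulVec_injective_of_rank_eq_card (by simpa using hrank))
  have hM : IsUnit (Hᴴ * C⁻¹ * H + (Hᴴ * C⁻¹ * H)ᵀ) := (hG.add hG.transpose).isUnit
  obtain rfl : e₀ = star (blueWeights H C i) := by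
    rw [he₀, hG.isHermitian.two_smul_map_re]
    rfl
  have hunbiased := blueWeights_unbiased hC.isHermitian hM i
  rw [star_star]
  refine ⟨hunbiased, fun e he => ?_⟩
  have hbias : star (e - star (blueWeights H C i)) ᵥ* H +
      (e - star (blueWeights H C i)) ᵥ* H.map (starRingEnd ℂ) = 0 := by
    rw [star_sub, star_star, sub_vecMul, sub_vecMul, sub_add_sub_comm, he, hunbiased, sub_self]
  rw [obj_eq_two_mul hC.isHermitian, obj_eq_two_mul hC.isHermitian,
    ← add_sub_cancel (star (blueWeights H C i)) e]
  refine mul_le_mul_of_nonneg_left (hC.posSemidef.star_dotProduct_mulVec_le_add ?_) zero_le_two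
  rw [star_star]
  exact blueWeights_dotProduct_mulVec_add_star_eq_zero hC.isHermitian hC.isUnit i hbias
end

section
/- Let H ∈ C^{m×n} with full column rank and C ∈ C^{m×m} Hermitian positive definite. Let A = H^H C^{-1} H (the inverse covariance of the BLUE) and B = 2 Re(A). Then for every real vector v ∈ R^n, v^T B^{-1} v ≤ (1/2) v^T Re(A^{-1}) v · 2, and more precisely the i-th diagonal entry of B^{-1} = (2 Re(A))^{-1} is at most the i-th diagonal entry of (1/2) (A^{-1} + (A^{-1})^*); i.e., the BWLUE for real parameters has elementwise variance no larger than half the sum of the BLUE's variance and its conjugate. -/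
open Matrix ComplexOrder

/-!
Conjugating a Hermitian matrix transposes it, so for `A` Hermitian positive definite
`2 Re A = A + Aᵀ` and `Re (A⁻¹) = (A⁻¹ + (Aᵀ)⁻¹) / 2`, where `Aᵀ` is again positive definite.
The claim thus follows from the harmonic–arithmetic mean inequality
`4 (X + Y)⁻¹ ≤ X⁻¹ + Y⁻¹` for positive definite `X, Y`, which follows by adding the variational
bounds `2 Re ⟪u, v⟫ - ⟪u, X u⟫ ≤ ⟪v, X⁻¹ v⟫` for `X` and `Y` at `u = 2 (X + Y)⁻¹ v`.
-/

namespace Matrix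

lemma mulVec_injective_iff_rank_eq_card {K m n : Type*} [Field K] [Fintype n]
    (A : Matrix m n K) : Function.Injective A.mulVec ↔ A.rank = Fintype.card n := by
  rw [mulVec_injective_iff, linearIndependent_iff_card_eq_finrank_span,
    rank_eq_finrank_span_cols, eq_comm]
  rfl

lemma IsHermitian.map_star_eq_transpose {α n : Type*} [Star α] {M : Matrix n n α}
    (hM : M.IsHermitian) : M.map star = Mᵀ := by
  ext i j
  exact congr_fun₂ hM j i

lemma IsHermitian.star_mulVec_dotProduct {α n : Type*} [CommSemiring α] [StarRing α] [Fintype n]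
    {M : Matrix n n α} (hM : M.IsHermitian) (u v : n → α) :
    star (M *ᵥ u) ⬝ᵥ v = star u ⬝ᵥ M *ᵥ v := by
  rw [star_mulVec, hM.eq, dotProduct_mulVec]

lemma map_re_eq_half_smul_add_map_star {m n : Type*} (M : Matrix m n ℂ) :
    M.map (fun z => (z.re : ℂ)) = (1 / 2 : ℂ) • (M + M.map star) := by
  ext i j
  simp only [map_apply, smul_apply, add_apply, smul_eq_mul, Complex.star_def, Complex.add_conj]
  push_cast
  ring

variable {𝕜 n : Type*} [RCLike 𝕜] [Fintype n] [DecidableEq n]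

lemma PosDef.mulVec_inv_mulVec {X : Matrix n n 𝕜} (hX : X.PosDef) (v : n → 𝕜) :
    X *ᵥ (X⁻¹ *ᵥ v) = v := by
  rw [mulVec_mulVec, mul_nonsing_inv _ ((isUnit_iff_isUnit_det X).1 hX.isUnit), one_mulVec]

lemma PosDef.dotProduct_add_dotProduct_le {X : Matrix n n 𝕜} (hX : X.PosDef) (u v : n → 𝕜) :
    star u ⬝ᵥ v + star v ⬝ᵥ u ≤ star u ⬝ᵥ X *ᵥ u + star v ⬝ᵥ X⁻¹ *ᵥ v := by
  set w := X⁻¹ *ᵥ v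
  have hXw : X *ᵥ w = v := hX.mulVec_inv_mulVec v
  have hwXu : star w ⬝ᵥ X *ᵥ u = star v ⬝ᵥ u := by
    rw [← hX.isHermitian.star_mulVec_dotProduct, hXw]
  have hwv : star w ⬝ᵥ v = star v ⬝ᵥ w := hX.isHermitian.inv.star_mulVec_dotProduct v v
  have h := hX.posSemidef.dotProduct_mulVec_nonneg (u - w)
  rw [star_sub, mulVec_sub, dotProduct_sub, sub_dotProduct, sub_dotProduct, hXw, hwXu, hwv] at h
  linear_combination h

lemma PosDef.four_mul_dotProduct_inv_add_mulVec_le {X Y : Matrix n n 𝕜} (hX : X.PosDef)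
    (hY : Y.PosDef) (v : n → 𝕜) :
    4 * (star v ⬝ᵥ (X + Y)⁻¹ *ᵥ v) ≤ star v ⬝ᵥ (X⁻¹ + Y⁻¹) *ᵥ v := by
  set w := (X + Y)⁻¹ *ᵥ v
  have hwv : star w ⬝ᵥ v = star v ⬝ᵥ w := (hX.add hY).isHermitian.inv.star_mulVec_dotProduct v v
  have huv : star ((2 : 𝕜) • w) ⬝ᵥ v = 2 * (star v ⬝ᵥ w) := by
    rw [star_smul, smul_dotProduct, hwv, star_ofNat, smul_eq_mul]
  have hvu : star v ⬝ᵥ (2 : 𝕜) • w = 2 * (star v ⬝ᵥ w) := by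
    rw [dotProduct_smul, smul_eq_mul]
  have huu : star ((2 : 𝕜) • w) ⬝ᵥ X *ᵥ ((2 : 𝕜) • w) + star ((2 : 𝕜) • w) ⬝ᵥ Y *ᵥ ((2 : 𝕜) • w)
      = 4 * (star v ⬝ᵥ w) := by
    rw [← dotProduct_add, ← add_mulVec, mulVec_smul, (hX.add hY).mulVec_inv_mulVec, dotProduct_smul,
      huv, smul_eq_mul]
    ring
  have hX' := hX.dotProduct_add_dotProduct_le ((2 : 𝕜) • w) v
  have hY' := hY.dotProduct_add_dotProduct_le ((2 : 𝕜) • w) v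
  rw [add_mulVec, dotProduct_add]
  linear_combination hX' + hY' - 2 * huv - 2 * hvu + huu

lemma PosDef.dotProduct_inv_add_mulVec_le_half {X Y : Matrix n n 𝕜} (hX : X.PosDef)
    (hY : Y.PosDef) (v : n → 𝕜) :
    star v ⬝ᵥ (X + Y)⁻¹ *ᵥ v ≤ star v ⬝ᵥ ((1 / 2 : 𝕜) • (X⁻¹ + Y⁻¹)) *ᵥ v := by
  have h4 := hX.four_mul_dotProduct_inv_add_mulVec_le hY v
  have h0 := (hX.add hY).inv.posSemidef.dotProduct_mulVec_nonneg v
  rw [smul_mulVec, dotProduct_smul, smul_eq_mul]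
  linear_combination (1 / 2 : 𝕜) * h4 + h0

end Matrix

/-- With `A = Hᴴ C⁻¹ H` and `B = 2 Re A`: for every real vector `v`,
`vᵀ B⁻¹ v ≤ vᵀ Re(A⁻¹) v`, and the `i`-th diagonal entry of `B⁻¹` is at most the `i`-th
diagonal entry of `(1/2)(A⁻¹ + (A⁻¹)*)`. -/
theorem stmt11 {m n : ℕ} (H : Matrix (Fin m) (Fin n) ℂ) (C : Matrix (Fin m) (Fin m) ℂ)
    (hC : C.PosDef) (hrank : H.rank = n)
    (A B : Matrix (Fin n) (Fin n) ℂ)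
    (hA : A = Hᴴ * C⁻¹ * H)
    (hB : B = (2 : ℂ) • A.map (fun z => (z.re : ℂ))) :
    (∀ v : Fin n → ℝ,
      (fun j => (v j : ℂ)) ⬝ᵥ B⁻¹.mulVec (fun j => (v j : ℂ))
        ≤ (fun j => (v j : ℂ)) ⬝ᵥ ((A⁻¹).map (fun z => (z.re : ℂ))).mulVec
            (fun j => (v j : ℂ))) ∧
    ∀ i, B⁻¹ i i ≤ ((1 / 2 : ℂ) • (A⁻¹ + (A⁻¹).map (starRingEnd ℂ))) i i := by
  have hApos : A.PosDef := hA ▸ hC.inv.conjTranspose_mul_mul_same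
    ((mulVec_injective_iff_rank_eq_card H).2 (by rw [hrank, Fintype.card_fin]))
  have hB' : B = A + Aᵀ := by
    rw [hB, map_re_eq_half_smul_add_map_star, smul_smul, hApos.isHermitian.map_star_eq_transpose]
    norm_num
  have hInvConj : (A⁻¹).map (starRingEnd ℂ) = (Aᵀ)⁻¹ := by
    rw [← transpose_nonsing_inv]
    exact hApos.isHermitian.inv.map_star_eq_transpose
  have key : ∀ x : Fin n → ℂ, star x = x →
      x ⬝ᵥ B⁻¹ *ᵥ x ≤ x ⬝ᵥ ((1 / 2 : ℂ) • (A⁻¹ + (A⁻¹).map (starRingEnd ℂ))) *ᵥ x := by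
    intro x hx
    simpa only [hx, hB', hInvConj] using
      hApos.dotProduct_inv_add_mulVec_le_half hApos.transpose x
  refine ⟨fun v => ?_, fun i => ?_⟩
  · rw [map_re_eq_half_smul_add_map_star]
    exact key _ (by ext j; simp)
  · simpa [mulVec_single, mul_add] using key (Pi.single i 1) (by ext j; simp [Pi.single_apply])
end
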